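/- Let θ > 0, ε > 0, let ν be a probability measure on ℝ (the distribution of user i's data), and let μ be a probability measure on ℝ (the distribution of the other users' aggregate). Define f_P(y) = ∫∫ p_θ(y - m - t) dμ(m) dν(t) and f_⊥(y) = ∫ p_θ(y - m) dμ(m). If ∫ e^{|t|/θ} dν(t) ≤ e^ε, then f_P(y) ≤ e^ε · f_⊥(y) for all y ∈ ℝ. -/

import Mathlib

open MeasureTheory

/-- The Laplace density with scale parameter `θ`. -/
noncomputable def lap (θ z : ℝ) : ℝ := (1 / (2 * θ)) * Real.exp (-|z| / θ)

/-!
Shifting the argument of the Laplace density by `t` changes it by a factor at most `e^{|t|/θ}`,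
since `|z| - |t| ≤ |z - t|`. Integrating against `μ`, the density conditional on the user's
value `t` is at most `e^{|t|/θ} f_⊥(y)`; integrating against `ν`, the moment condition bounds
the average factor by `e^ε`.
-/

section Laplace

variable {θ : ℝ}

lemma lap_nonneg (hθ : 0 ≤ θ) (z : ℝ) : 0 ≤ lap θ z := by
  unfold lap
  positivity

lemma lap_le_lap_zero (hθ : 0 ≤ θ) (z : ℝ) : lap θ z ≤ lap θ 0 := by
  unfold lap
  rw [abs_zero, neg_zero, zero_div, neg_div]
  gcongr
  rw [Left.neg_nonpos_iff]
  positivity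

lemma continuous_lap (θ : ℝ) : Continuous (lap θ) := by
  unfold lap
  fun_prop

lemma lap_sub_le_exp_mul_lap (hθ : 0 < θ) (z t : ℝ) :
    lap θ (z - t) ≤ Real.exp (|t| / θ) * lap θ z := by
  have hexp : -|z - t| / θ ≤ |t| / θ + -|z| / θ := by
    rw [← add_div]
    gcongr
    linarith [abs_sub_abs_le_abs_sub z t]
  calc lap θ (z - t) ≤ 1 / (2 * θ) * Real.exp (|t| / θ + -|z| / θ) := by
        unfold lap
        gcongr
    _ = Real.exp (|t| / θ) * lap θ z := by
        rw [Real.exp_add, lap]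
        ring

lemma integrable_lap_comp {α : Type*} [MeasurableSpace α] {μ : Measure α} [IsFiniteMeasure μ]
    (hθ : 0 ≤ θ) {g : α → ℝ} (hg : AEStronglyMeasurable g μ) :
    Integrable (fun a => lap θ (g a)) μ :=
  .of_bound ((continuous_lap θ).comp_aestronglyMeasurable hg) (lap θ 0) <| .of_forall fun a => by
    rw [Real.norm_of_nonneg (lap_nonneg hθ _)]
    exact lap_le_lap_zero hθ _

lemma integral_lap_sub_le (hθ : 0 < θ) (μ : Measure ℝ) [IsFiniteMeasure μ] (y t : ℝ) :
    ∫ m, lap θ (y - m - t) ∂μ ≤ Real.exp (|t| / θ) * ∫ m, lap θ (y - m) ∂μ := by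
  rw [← integral_const_mul]
  refine integral_mono_of_nonneg (.of_forall fun m => lap_nonneg hθ.le _) ?_
    (.of_forall fun m => lap_sub_le_exp_mul_lap hθ (y - m) t)
  exact (integrable_lap_comp hθ.le (by fun_prop)).const_mul _

end Laplace

theorem pufferfish_distribution_absence_general (θ ε : ℝ) (hθ : 0 < θ)
    (ν μ : Measure ℝ) [IsProbabilityMeasure ν] [IsProbabilityMeasure μ]
    (hint : Integrable (fun t => Real.exp (|t| / θ)) ν)
    (hmom : (∫ t, Real.exp (|t| / θ) ∂ν) ≤ Real.exp ε) (y : ℝ) :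
    (∫ t, ∫ m, lap θ (y - m - t) ∂μ ∂ν) ≤ Real.exp ε * ∫ m, lap θ (y - m) ∂μ := by
  set fAbsent := ∫ m, lap θ (y - m) ∂μ
  have hAbsent : 0 ≤ fAbsent := integral_nonneg (lap_nonneg hθ.le <| y - ·)
  calc (∫ t, ∫ m, lap θ (y - m - t) ∂μ ∂ν)
      ≤ ∫ t, Real.exp (|t| / θ) * fAbsent ∂ν :=
        integral_mono_of_nonneg (.of_forall fun t => integral_nonneg fun m => lap_nonneg hθ.le _)
          (hint.mul_const _) (.of_forall <| integral_lap_sub_le hθ μ y)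
    _ = (∫ t, Real.exp (|t| / θ) ∂ν) * fAbsent := integral_mul_const _ _
    _ ≤ Real.exp ε * fAbsent := mul_le_mul_of_nonneg_right hmom hAbsent

/-- Relaxed sufficient condition for `(ε, S_{P,⊥})`-pufferfish privacy: if the moment
condition `∫ e^{|t|/θ} dν(t) ≤ e^ε` holds for the user's data distribution `ν`, then the
noised density with the user present is at most `e^ε` times the density with the user
absent. -/
theorem pufferfish_distribution_absence (θ ε : ℝ) (hθ : 0 < θ) (hε : 0 < ε)
    (ν μ : Measure ℝ) [IsProbabilityMeasure ν] [IsProbabilityMeasure μ]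
    (hint : Integrable (fun t => Real.exp (|t| / θ)) ν)
    (hmom : (∫ t, Real.exp (|t| / θ) ∂ν) ≤ Real.exp ε) (y : ℝ) :
    (∫ t, ∫ m, lap θ (y - m - t) ∂μ ∂ν) ≤ Real.exp ε * ∫ m, lap θ (y - m) ∂μ :=
  pufferfish_distribution_absence_general θ ε hθ ν μ hint hmom y
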